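/- arXiv:2309.05470 — 5 statements merged into one kernel-verified Lean document; each statement's English description precedes it below -/
import Mathlib

section
/- Let q be a prime power, N, m positive integers, and u_1,...,u_m elements of the algebraic closure of F_q whose minimal polynomials over F_q are pairwise distinct. Let k_i = [F_q(u_i) : F_q], and for each i let A(u_i) be the k_i × N matrix over F_q whose j-th column expresses u_i^{j-1} in the basis 1, u_i, ..., u_i^{k_i - 1} of F_q(u_i). Then the block matrix obtained by stacking A(u_1), ..., A(u_m) vertically has rank equal to min(k_1 + ... + k_m, N). -/
/-!
A vector `c ∈ F^N` lies in the kernel of the stacked matrix iff `p = ∑ c_j X^j` vanishes at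
every `u_i`, i.e. iff `p` is divisible by the product `P` of the pairwise coprime minimal
polynomials. The multiples of `P` of degree `< N` are `P · F[X]_{< N - deg P}`, so the kernel has
dimension `N - deg P` (truncated subtraction) and the rank is `min (deg P) N`.
-/

open Matrix Polynomial Module LinearMap

namespace Polynomial

section Semiring

variable {R : Type*} [Semiring R] [NoZeroDivisors R]

theorem mul_mem_degreeLT_iff {P : R[X]} (hP : P ≠ 0) {q : R[X]} {N : ℕ} :
    P * q ∈ degreeLT R N ↔ q ∈ degreeLT R (N - P.natDegree) := by
  rcases eq_or_ne q 0 with rfl | hq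
  · simp only [mul_zero, Submodule.zero_mem]
  rw [mem_degreeLT, mem_degreeLT, degree_eq_natDegree (mul_ne_zero hP hq),
    degree_eq_natDegree hq, natDegree_mul hP hq]
  norm_cast
  omega

end Semiring

theorem finrank_degreeLT {R : Type*} [Ring R] [StrongRankCondition R] (n : ℕ) :
    finrank R R[X]_n = n := by
  rw [finrank_eq_card_basis (degreeLT.basis R n), Fintype.card_fin]

theorem aeval_eq_sum_degreeLTEquiv {R A : Type*} [CommSemiring R] [Semiring A] [Algebra R A]
    {n : ℕ} (p : R[X]_n) (x : A) :
    aeval x (p : R[X]) = ∑ i, degreeLTEquiv R n p i • x ^ (i : ℕ) := by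
  simp only [aeval_def, eval₂_eq_sum, Algebra.smul_def]
  exact (sum_fin _ (by simp) (mem_degreeLT.mp p.2)).symm

section CommRing

variable {R : Type*} [CommRing R] [IsDomain R] {P : R[X]} (hP : P ≠ 0) (N : ℕ)

noncomputable def mulLeftDegreeLT : R[X]_(N - P.natDegree) →ₗ[R] R[X]_N :=
  ((LinearMap.mulLeft R P).comp (degreeLT R _).subtype).codRestrict _ fun q =>
    (mul_mem_degreeLT_iff hP).2 q.2

variable {hP N}

theorem mulLeftDegreeLT_injective : Function.Injective (mulLeftDegreeLT hP N) :=
  fun _ _ h => Subtype.ext (mul_left_cancel₀ hP (congrArg Subtype.val h))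

theorem mem_range_mulLeftDegreeLT_iff (p : R[X]_N) :
    p ∈ range (mulLeftDegreeLT hP N) ↔ P ∣ (p : R[X]) := by
  refine ⟨?_, fun ⟨q, hq⟩ => ?_⟩
  · rintro ⟨q, rfl⟩
    exact dvd_mul_right P q
  · exact ⟨⟨q, (mul_mem_degreeLT_iff hP).1 (hq ▸ p.2)⟩, Subtype.ext hq.symm⟩

end CommRing

theorem finrank_range_eq_min_of_ker_eq_dvd {K V : Type*} [Field K] [AddCommGroup V] [Module K V]
    {P : K[X]} (hP : P ≠ 0) {N : ℕ} (f : K[X]_N →ₗ[K] V)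
    (hf : ∀ p, f p = 0 ↔ P ∣ (p : K[X])) : finrank K (range f) = min P.natDegree N := by
  have hker : ker f = range (mulLeftDegreeLT hP N) := by
    ext p
    rw [mem_ker, hf, mem_range_mulLeftDegreeLT_iff]
  have := f.finrank_range_add_finrank_ker
  rw [hker, finrank_range_of_inj mulLeftDegreeLT_injective, finrank_degreeLT,
    finrank_degreeLT] at this
  omega

theorem prod_minpoly_dvd_iff {K L ι : Type*} [Field K] [CommRing L] [IsDomain L] [Algebra K L]
    [Fintype ι] {x : ι → L} (hx : ∀ i, IsIntegral K (x i))
    (hinj : Function.Injective fun i => minpoly K (x i)) (p : K[X]) :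
    ∏ i, minpoly K (x i) ∣ p ↔ ∀ i, aeval (x i) p = 0 := by
  refine ⟨fun ⟨q, hq⟩ i => ?_, fun h => Fintype.prod_dvd_of_coprime ?_ fun i => minpoly.dvd K _ (h i)⟩
  · rw [hq, map_mul, map_prod, Finset.prod_eq_zero (Finset.mem_univ i) (minpoly.aeval K _), zero_mul]
  · intro i j hij
    refine ((minpoly.irreducible (hx i)).isCoprime_or_dvd _).resolve_right fun hdvd => hij (hinj ?_)
    exact eq_of_monic_of_associated (minpoly.monic (hx i)) (minpoly.monic (hx j))
      ((minpoly.irreducible (hx i)).associated_of_dvd (minpoly.irreducible (hx j)) hdvd)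

end Polynomial

namespace Matrix

theorem mulVec_eq_zero_iff_sum_smul_eq_zero {K L ι κ : Type*} [CommRing K] [AddCommGroup L]
    [Module K L] [Fintype ι] [Fintype κ] {b : ι → L} (hb : LinearIndependent K b)
    (A : Matrix ι κ K) {w : κ → L} (hw : ∀ j, w j = ∑ l, A l j • b l) (c : κ → K) :
    A *ᵥ c = 0 ↔ ∑ j, c j • w j = 0 := by
  have hsum : ∑ j, c j • w j = ∑ l, (A *ᵥ c) l • b l := by
    simp only [hw, Finset.smul_sum, smul_smul, mulVec, dotProduct, Finset.sum_smul]
    rw [Finset.sum_comm]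
    simp only [mul_comm]
  rw [hsum, funext_iff]
  exact ⟨fun h => by simp [h], Fintype.linearIndependent_iff.1 hb _⟩

theorem rank_eq_min_natDegree_of_mulVec_eq_zero_iff {K ι : Type*} [Field K] {N : ℕ}
    (M : Matrix ι (Fin N) K) {P : K[X]} (hP : P ≠ 0)
    (hM : ∀ p : K[X]_N, M *ᵥ degreeLTEquiv K N p = 0 ↔ P ∣ (p : K[X])) :
    M.rank = min P.natDegree N := by
  rw [Matrix.rank, ← range_comp_of_range_eq_top _ (degreeLTEquiv K N).range]
  exact finrank_range_eq_min_of_ker_eq_dvd hP _ hM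

end Matrix

theorem stmt_0_general (F : Type*) [Field F] (N m : ℕ)
    (u : Fin m → AlgebraicClosure F)
    (hdist : ∀ i j : Fin m, minpoly F (u i) = minpoly F (u j) → i = j)
    (k : Fin m → ℕ) (hk : ∀ i, k i = (minpoly F (u i)).natDegree)
    (A : (i : Fin m) → Matrix (Fin (k i)) (Fin N) F)
    (hA : ∀ (i : Fin m) (j : Fin N),
      u i ^ (j : ℕ) = ∑ l : Fin (k i), algebraMap F (AlgebraicClosure F) (A i l j) * u i ^ (l : ℕ)) :
    (Matrix.of (fun p : Σ i : Fin m, Fin (k i) => fun j : Fin N => A p.1 p.2 j)).rank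
      = min (∑ i, k i) N := by
  obtain rfl : k = fun i => (minpoly F (u i)).natDegree := funext hk
  have hint (i : Fin m) : IsIntegral F (u i) := Algebra.IsIntegral.isIntegral _
  have hne (i : Fin m) : minpoly F (u i) ≠ 0 := minpoly.ne_zero (hint i)
  rw [← natDegree_prod _ _ fun i _ => hne i]
  refine rank_eq_min_natDegree_of_mulVec_eq_zero_iff _ (Finset.prod_ne_zero_iff.2 fun i _ => hne i)
    fun p => ?_
  have hblock (i : Fin m) : A i *ᵥ degreeLTEquiv F N p = 0 ↔ aeval (u i) (p : F[X]) = 0 := by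
    rw [aeval_eq_sum_degreeLTEquiv,
      mulVec_eq_zero_iff_sum_smul_eq_zero (linearIndependent_pow (u i))]
    simpa only [Algebra.smul_def] using hA i
  rw [prod_minpoly_dvd_iff hint hdist, ← forall_congr' hblock]
  simp only [funext_iff, Sigma.forall]
  rfl

/-- Let `F` be a finite field, `u₁,…,u_m` elements of its algebraic closure
with pairwise distinct minimal polynomials, `kᵢ = [F(uᵢ) : F]` and `A(uᵢ)` the `kᵢ × N`
matrix over `F` expressing the powers `uᵢ^0, …, uᵢ^{N-1}` in the basis `1, uᵢ, …, uᵢ^{kᵢ-1}`.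
Then the vertically stacked matrix has rank `min (k₁ + ⋯ + k_m) N`. -/
theorem stmt_0 (F : Type*) [Field F] [Fintype F] (N m : ℕ) (hN : 0 < N) (hm : 0 < m)
    (u : Fin m → AlgebraicClosure F)
    (hdist : ∀ i j : Fin m, minpoly F (u i) = minpoly F (u j) → i = j)
    (k : Fin m → ℕ) (hk : ∀ i, k i = (minpoly F (u i)).natDegree)
    (A : (i : Fin m) → Matrix (Fin (k i)) (Fin N) F)
    (hA : ∀ (i : Fin m) (j : Fin N),
      u i ^ (j : ℕ) = ∑ l : Fin (k i), algebraMap F (AlgebraicClosure F) (A i l j) * u i ^ (l : ℕ)) :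
    (Matrix.of (fun p : Σ i : Fin m, Fin (k i) => fun j : Fin N => A p.1 p.2 j)).rank
      = min (∑ i, k i) N :=
  stmt_0_general F N m u hdist k hk A hA
end

section
/- Let F be a field and K/F a finite Galois extension with Galois group G = {g_1, ..., g_n}. An element α ∈ K is normal over F (i.e., {g(α) : g ∈ G} is an F-basis of K) if and only if the group determinant det(X_{g_i g_j^{-1}}) evaluated at X_g = g(α) for each g ∈ G is nonzero; that is, if and only if det(g_i g_j^{-1}(α))_{i,j} ≠ 0. -/
/-!
Write `M` for the matrix `(gᵢ gⱼ⁻¹ (α))ᵢⱼ`. A relation `∑ c_g g(α) = 0` over `F`, pushed through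
each `gᵢ`, is a nonzero kernel vector of `M`. Conversely a nonzero `v` with `v M = 0` says that the
`K`-linear combination `∑ vᵢ gᵢ` of automorphisms vanishes on every conjugate `g(α)`; if these span
`K` it vanishes identically, which Dedekind's independence of characters forbids. For `K/F` Galois,
`|G| = [K : F]`, so linear independence of the conjugates already makes them a basis.
-/

open Matrix

section

variable {F K ι : Type*} [Field F] [Field K] [Algebra F K] [Fintype ι]

theorem AlgEquiv.eq_zero_of_sum_mul_apply_eq_zero {σ : ι → K ≃ₐ[F] K}
    (hσ : Function.Injective σ) {v : ι → K} (h : ∀ x, ∑ i, v i * σ i x = 0) : v = 0 := by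
  have hind : LinearIndependent K fun i => ((σ i : K →* K) : K → K) :=
    (linearIndependent_monoidHom K K).comp _ fun i j hij =>
      hσ (AlgEquiv.ext fun x => DFunLike.congr_fun hij x)
  exact funext <| Fintype.linearIndependent_iff.mp hind v <| funext fun x => by
    simpa [Finset.sum_apply] using h x

variable [DecidableEq ι]

/-- The matrix of the group determinant `D_G`, evaluated at `X_g = g(α)`. -/
def groupMatrix (e : ι ≃ (K ≃ₐ[F] K)) (α : K) : Matrix ι ι K :=
  of fun i j => (e i * (e j)⁻¹) α

theorem det_groupMatrix_ne_zero_of_span_eq_top (e : ι ≃ (K ≃ₐ[F] K)) {α : K}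
    (hspan : Submodule.span F (Set.range fun g : K ≃ₐ[F] K => g α) = ⊤) :
    (groupMatrix e α).det ≠ 0 := by
  intro hdet
  obtain ⟨v, hv0, hv⟩ := exists_vecMul_eq_zero_iff.mpr hdet
  let f : K →ₗ[F] K := ∑ i, v i • (e i).toLinearMap
  have hf : ∀ x, f x = ∑ i, v i * e i x := fun x => by
    simp [f, LinearMap.sum_apply]
  have hf_conj : ∀ g : K ≃ₐ[F] K, f (g α) = 0 := fun g => by
    obtain ⟨j, rfl⟩ : ∃ j, (e j)⁻¹ = g := ⟨e.symm g⁻¹, by simp⟩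
    simpa [hf, vecMul, dotProduct, groupMatrix] using congrFun hv j
  have hf_zero : f = 0 := LinearMap.ext_on_range hspan hf_conj
  exact hv0 <| AlgEquiv.eq_zero_of_sum_mul_apply_eq_zero e.injective fun x => by
    rw [← hf, hf_zero, LinearMap.zero_apply]

variable [FiniteDimensional F K] in
theorem linearIndependent_of_det_groupMatrix_ne_zero (e : ι ≃ (K ≃ₐ[F] K)) {α : K}
    (hdet : (groupMatrix e α).det ≠ 0) : LinearIndependent F fun g : K ≃ₐ[F] K => g α := by
  refine Fintype.linearIndependent_iff.mpr fun c hc g => ?_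
  let w : ι → K := fun j => algebraMap F K (c (e j)⁻¹)
  have hMw : groupMatrix e α *ᵥ w = 0 := funext fun i => by
    have : ∑ j, (e i) ((e j)⁻¹ α) * w j = e i (∑ g, c g • g α) := by
      rw [map_sum]
      refine Fintype.sum_equiv (e.trans (Equiv.inv _)) _ _ fun j => ?_
      simp [w, Algebra.smul_def, mul_comm]
    simpa [mulVec, dotProduct, groupMatrix, hc] using this
  simpa [w] using congrFun (eq_zero_of_mulVec_eq_zero hdet hMw) (e.symm g⁻¹)

end

/-- let `K/F` be a finite Galois extension with Galois group
`G = {g₁, …, g_n}` (enumerated by `e : Fin n ≃ G`).  An element `α ∈ K` is normal over `F`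
(its conjugates `g(α)`, `g ∈ G`, form an `F`-basis of `K`) iff the group determinant
evaluated at the conjugates, `det (gᵢ gⱼ⁻¹ (α))_{i,j}`, is nonzero. -/
theorem stmt_3 (F K : Type*) [Field F] [Field K] [Algebra F K]
    [FiniteDimensional F K] [IsGalois F K] (n : ℕ)
    (e : Fin n ≃ (K ≃ₐ[F] K)) (α : K) :
    (LinearIndependent F (fun g : K ≃ₐ[F] K => g α) ∧
        Submodule.span F (Set.range fun g : K ≃ₐ[F] K => g α) = ⊤) ↔
      Matrix.det (Matrix.of fun i j : Fin n => (e i * (e j)⁻¹) α) ≠ 0 := by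
  have hcard : Fintype.card (K ≃ₐ[F] K) = Module.finrank F K :=
    Fintype.card_eq_nat_card.trans (IsGalois.card_aut_eq_finrank F K)
  refine ⟨fun h => det_groupMatrix_ne_zero_of_span_eq_top e h.2, fun hdet => ?_⟩
  have hli := linearIndependent_of_det_groupMatrix_ne_zero e hdet
  exact ⟨hli, hli.span_eq_top_of_card_eq_finrank hcard⟩
end

section
/- Let f be a monic separable irreducible polynomial of degree n over a finite field F_q with a root r, so that the roots of f are r, r^q, ..., r^{q^{n-1}}. Then f is a normal polynomial over F_q (i.e., its roots form an F_q-basis of F_{q^n}) if and only if the circulant determinant Δ_n(r, r^q, ..., r^{q^{n-1}}) ≠ 0, where Δ_n(X_0, ..., X_{n-1}) is the determinant of the n×n circulant matrix with first row X_0, X_1, ..., X_{n-1}. -/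
/-!
The Frobenius `φ : x ↦ x ^ q` generates `Gal(K/F)`, and the circulant matrix has `(i, j)` entry
`φ⁻ⁱ (r ^ q ^ j)`, so it is the matrix `(σᵢ (b j))` of `n` distinct `F`-algebra maps applied to
the family `b j = r ^ q ^ j`. For such a matrix, a nonzero kernel vector is an `F`-linear
relation among the `b j`, while a nonzero left-kernel vector `c` makes `∑ cᵢ σᵢ` vanish on the
span of `b`; when `b` is a basis this contradicts Dedekind's independence of characters.
-/

section AlgHomMatrix

variable {K L E ι : Type*} [Field K] [Field L] [Field E] [Algebra K L] [Algebra K E]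
  [Fintype ι] [DecidableEq ι]

theorem linearIndependent_of_det_algHom_apply_ne_zero (σ : ι → L →ₐ[K] E) {b : ι → L}
    (hdet : (Matrix.of fun i j => σ i (b j)).det ≠ 0) : LinearIndependent K b := by
  rw [Fintype.linearIndependent_iff]
  intro c hc
  have hmulVec : (Matrix.of fun i j => σ i (b j)).mulVec (algebraMap K E ∘ c) = 0 := by
    funext i
    simpa [Matrix.mulVec, dotProduct, Algebra.smul_def, mul_comm] using congrArg (σ i) hc
  intro j
  simpa using congrFun (Matrix.eq_zero_of_mulVec_eq_zero hdet hmulVec) j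

theorem det_algHom_apply_ne_zero [FiniteDimensional K L] {σ : ι → L →ₐ[K] E}
    (hσ : Function.Injective σ) {b : ι → L} (hb : LinearIndependent K b)
    (hcard : Fintype.card ι = Module.finrank K L) :
    (Matrix.of fun i j => σ i (b j)).det ≠ 0 := by
  intro hdet
  obtain ⟨c, hc0, hc⟩ := Matrix.exists_vecMul_eq_zero_iff.mpr hdet
  have hsum : ∑ i, c i • (σ i).toLinearMap = 0 := by
    refine LinearMap.ext_on_range (hb.span_eq_top_of_card_eq_finrank' hcard) fun j => ?_
    simpa [Matrix.vecMul, dotProduct, mul_comm] using congrFun hc j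
  exact hc0 <| funext <| Fintype.linearIndependent_iff.mp
    ((linearIndependent_algHom_toLinearMap K L E).comp σ hσ) c hsum

theorem linearIndependent_iff_det_algHom_apply_ne_zero [FiniteDimensional K L]
    {σ : ι → L →ₐ[K] E} (hσ : Function.Injective σ) {b : ι → L}
    (hcard : Fintype.card ι = Module.finrank K L) :
    LinearIndependent K b ↔ (Matrix.of fun i j => σ i (b j)).det ≠ 0 :=
  ⟨fun hb => det_algHom_apply_ne_zero hσ hb hcard,
    linearIndependent_of_det_algHom_apply_ne_zero σ⟩

end AlgHomMatrix

namespace FiniteField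

variable (F : Type*) {R K : Type*} [Field F] [Fintype F]

theorem frobeniusAlgHom_pow_apply [CommRing R] [Algebra F R] (m : ℕ) (x : R) :
    (frobeniusAlgHom F R ^ m) x = x ^ Fintype.card F ^ m := by
  rw [AlgHom.coe_pow, coe_frobeniusAlgHom, pow_iterate]

variable [Field K] [Algebra F K] [Finite K]

theorem frobeniusAlgHom_pow_mod_finrank (m : ℕ) :
    frobeniusAlgHom F K ^ (m % Module.finrank F K) = frobeniusAlgHom F K ^ m := by
  rw [← orderOf_frobeniusAlgHom]
  exact pow_mod_orderOf _ m

theorem frobeniusAlgHom_pow_neg_apply_pow (i j : Fin (Module.finrank F K)) (x : K) :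
    (frobeniusAlgHom F K ^ ((-i : Fin _) : ℕ)) (x ^ Fintype.card F ^ (j : ℕ)) =
      x ^ Fintype.card F ^ (((j : ℕ) + Module.finrank F K - i) % Module.finrank F K) := by
  rw [← frobeniusAlgHom_pow_apply, ← frobeniusAlgHom_pow_apply, ← AlgHom.mul_apply, ← pow_add,
    ← frobeniusAlgHom_pow_mod_finrank F (_ + _), Fin.val_neg', Nat.mod_add_mod]
  congr 3
  omega

theorem injective_frobeniusAlgHom_pow_neg [NeZero (Module.finrank F K)] :
    Function.Injective fun i : Fin (Module.finrank F K) =>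
      frobeniusAlgHom F K ^ ((-i : Fin _) : ℕ) :=
  (bijective_frobeniusAlgHom_pow F K).injective.comp neg_injective

end FiniteField

theorem stmt_4_general (F K : Type*) [Field F] [Fintype F] [Field K] [Algebra F K]
    (n : ℕ) (hn : 0 < n)
    (hK : Module.finrank F K = n)
    (r : K) :
    (LinearIndependent F (fun k : Fin n => r ^ Fintype.card F ^ (k : ℕ)) ∧
        Submodule.span F (Set.range fun k : Fin n => r ^ Fintype.card F ^ (k : ℕ)) = ⊤) ↔
      Matrix.det (Matrix.of fun i j : Fin n =>
          r ^ Fintype.card F ^ (((j : ℕ) + n - (i : ℕ)) % n)) ≠ 0 := by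
  have : FiniteDimensional F K := .of_finrank_pos (hK ▸ hn)
  have : Finite K := Module.finite_of_finite F
  subst hK
  have : NeZero (Module.finrank F K) := ⟨hn.ne'⟩
  simp_rw [← FiniteField.frobeniusAlgHom_pow_neg_apply_pow F]
  rw [← linearIndependent_iff_det_algHom_apply_ne_zero
    (FiniteField.injective_frobeniusAlgHom_pow_neg F) (Fintype.card_fin _)]
  exact ⟨And.left, fun hb => ⟨hb, hb.span_eq_top_of_card_eq_finrank' (Fintype.card_fin _)⟩⟩

/-- let `f` be a monic separable irreducible polynomial of degree `n` over a
finite field `F` with `q` elements, with a root `r` in an extension `K` of degree `n`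
(so the roots of `f` are `r, r^q, …, r^{q^{n-1}}`).  Then `f` is normal over `F`
(its roots form an `F`-basis of `K ≅ F_{q^n}`) iff the circulant determinant
`Δ_n(r, r^q, …, r^{q^{n-1}}) ≠ 0`, where the circulant matrix has `(i,j)` entry
`X_{(j-i) mod n}` with `X_k = r^{q^k}`. -/
theorem stmt_4 (F K : Type*) [Field F] [Fintype F] [Field K] [Algebra F K]
    (n : ℕ) (hn : 0 < n) (f : Polynomial F)
    (hmonic : f.Monic) (hsep : f.Separable) (hirr : Irreducible f)
    (hdeg : f.natDegree = n) (hK : Module.finrank F K = n)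
    (r : K) (hr : Polynomial.aeval r f = 0) :
    (LinearIndependent F (fun k : Fin n => r ^ Fintype.card F ^ (k : ℕ)) ∧
        Submodule.span F (Set.range fun k : Fin n => r ^ Fintype.card F ^ (k : ℕ)) = ⊤) ↔
      Matrix.det (Matrix.of fun i j : Fin n =>
          r ^ Fintype.card F ^ (((j : ℕ) + n - (i : ℕ)) % n)) ≠ 0 :=
  stmt_4_general F K n hn hK r
end

section
/- Let m divide n with n ≥ 3. Partition {0,...,n-1} into blocks I_i = {i + mj : 0 ≤ j ≤ n/m - 1} for 0 ≤ i ≤ m-1, and let S_m ≀ S_{n/m} ≤ S_n be the corresponding wreath product (permutations that permute blocks and elements within blocks). Suppose A(Y_0,...,Y_{m-1}) ∈ ℂ[Y_0,...,Y_{m-1}] satisfies A(Y_{σ(0)},...,Y_{σ(m-1)}) = ±A(Y_0,...,Y_{m-1}) for every σ ∈ S_m, and B(Z_0,...,Z_{n/m-1}) is a symmetric polynomial. Set B_i = B(X_i, X_{i+m}, ..., X_{i+(n/m-1)m}) and F = A(B_0,...,B_{m-1}) ∈ ℂ[X_0,...,X_{n-1}]. If deg_{X_0} F(X_0, 0, ...,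 0) > 0, then for any left transversal ℰ of S_m ≀ S_{n/m} in S_n of the form described (one representative per unordered partition of {0,...,n-1} into m blocks of size n/m), the product ∏_{φ ∈ ℰ} φ(F) is a symmetric polynomial in X_0, ..., X_{n-1}. -/
/-!
An element of the wreath product permutes the blocks by some `σ ∈ S_m` and each block internally,
so, `B` being symmetric, it maps `F` to `A(B_{σ 0}, …, B_{σ (m-1)}) = ±F`. As `ℰ` is a left
transversal, left multiplication by any `s ∈ S_n` permutes `ℰ` modulo the wreath product, so `s`
maps `P = ∏_{φ ∈ ℰ} φ(F)` to `±P` (compare squares). A transposition `(a b)` cannot act by `-1`: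
for `c ∉ {a, b}` the point `X_c = X`, `X_x = 0` otherwise, is fixed by `(a b)`, and `P` does not
vanish there: each factor is a specialization of `F` at a single variable, and these are all `±`
the one at `X_0` because the translations `x ↦ x + k` of `ℤ/n` lie in the wreath product.
-/

open MvPolynomial Equiv

/-- The injection `(i, j) ↦ i + m·j` of `Fin m × Fin (n/m)` into `Fin n` (for `m ∣ n`),
enumerating the block `I_i = {i + mj : 0 ≤ j ≤ n/m - 1}`. -/
def blockEmb (n m : ℕ) (hm : m ∣ n) (i : Fin m) (j : Fin (n / m)) : Fin n :=
  ⟨(i : ℕ) + m * (j : ℕ), by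
    have h1 : (i : ℕ) < m := i.isLt
    have h2 : (j : ℕ) + 1 ≤ n / m := j.isLt
    have h3 : m * (n / m) = n := Nat.mul_div_cancel' hm
    calc (i : ℕ) + m * (j : ℕ) < m * ((j : ℕ) + 1) := by
          have : m * ((j : ℕ) + 1) = m * (j : ℕ) + m := by ring
          omega
      _ ≤ m * (n / m) := Nat.mul_le_mul_left m h2
      _ = n := h3⟩

/-- Membership in the wreath product `S_m ≀ S_{n/m} ≤ S_n`, realized as the stabilizer of the
unordered partition of `{0,…,n-1}` into the blocks `I_i = {i + mj : 0 ≤ j ≤ n/m - 1}`. -/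
def memWreath (m n : ℕ) (π : Equiv.Perm (Fin n)) : Prop :=
  ∀ x y : Fin n, ((x : ℕ) % m = (y : ℕ) % m ↔ ((π x : Fin n) : ℕ) % m = ((π y : Fin n) : ℕ) % m)

namespace MvPolynomial

variable {ι R S : Type*}

theorem aeval_single_rename [CommSemiring R] [CommSemiring S] [Algebra R S] [DecidableEq ι]
    (σ : Perm ι) (k : ι) (x : S) (p : MvPolynomial ι R) :
    aeval (Pi.single (σ k) x) (rename σ p) = aeval (Pi.single k x) p := by
  rw [aeval_rename, Pi.single_comp_equiv, symm_apply_apply]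

theorem IsSymmetric.of_rename_swap [CommSemiring R] [DecidableEq ι] [Finite ι]
    {p : MvPolynomial ι R} (h : ∀ a b : ι, a ≠ b → rename (swap a b) p = p) : p.IsSymmetric := by
  intro σ
  induction σ using Perm.swap_induction_on with
  | one => exact rename_id_apply p
  | swap_mul f a b hab hf => rw [Perm.coe_mul, ← rename_rename, hf, h a b hab]

theorem isSymmetric_of_rename_swap_eq_or_eq_neg [CommRing R] [CommRing S] [Algebra R S]
    [NoZeroDivisors S] [CharZero S] [Fintype ι] [DecidableEq ι] (hι : 2 < Fintype.card ι)
    {p : MvPolynomial ι R} (x : S)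
    (hswap : ∀ a b : ι, rename (swap a b) p = p ∨ rename (swap a b) p = -p)
    (hp : ∀ k, aeval (Pi.single k x) p ≠ 0) : p.IsSymmetric := by
  refine IsSymmetric.of_rename_swap fun a b _ => (hswap a b).resolve_right fun hneg => ?_
  obtain ⟨c, -, hc⟩ : ∃ c, c ∈ Finset.univ ∧ c ∉ ({a, b} : Finset ι) :=
    Finset.exists_mem_notMem_of_card_lt_card
      ((Finset.card_le_two).trans_lt (by rwa [Finset.card_univ]))
  simp only [Finset.mem_insert, Finset.mem_singleton, not_or] at hc
  have hfix := aeval_single_rename (swap a b) c x p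
  rw [swap_apply_of_ne_of_ne hc.1 hc.2, hneg, map_neg, CharZero.neg_eq_self_iff] at hfix
  exact hp c hfix

theorem aeval_single_ne_zero_of_rename_eq_or_eq_neg [CommRing R] [CommRing S] [Algebra R S]
    [DecidableEq ι] {p : MvPolynomial ι R} {w : Perm ι}
    (hw : rename w p = p ∨ rename w p = -p) {k : ι} {x : S}
    (hk : aeval (Pi.single k x) p ≠ 0) : aeval (Pi.single (w k) x) p ≠ 0 := by
  rw [← aeval_single_rename w k x p] at hk
  rcases hw with h | h
  · rwa [h] at hk
  · rwa [h, map_neg, neg_ne_zero] at hk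

end MvPolynomial

theorem Finset.prod_mul_left_of_existsUnique_inv_mul_mem {G M : Type*} [Group G] [CommMonoid M]
    {H : Subgroup G} {E : Finset G} (hE : ∀ g, ∃! τ, τ ∈ E ∧ τ⁻¹ * g ∈ H)
    {f : G → M} (hf : ∀ g, ∀ h ∈ H, f (g * h) = f g) (s : G) :
    ∏ τ ∈ E, f (s * τ) = ∏ τ ∈ E, f τ := by
  choose r hr using fun g => (hE g).exists
  have hrep : ∀ g τ, τ ∈ E → τ⁻¹ * g ∈ H → r g = τ := fun g τ hτ hg =>
    (hE g).unique (hr g) ⟨hτ, hg⟩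
  have hinv : ∀ t g, t⁻¹ * g ∈ H → g⁻¹ * t ∈ H := fun t g h => by
    simpa using H.inv_mem h
  refine Finset.prod_bij' (fun τ _ => r (s * τ)) (fun τ _ => r (s⁻¹ * τ))
    (fun τ _ => (hr _).1) (fun τ _ => (hr _).1) (fun τ hτ => hrep _ _ hτ ?_)
    (fun τ hτ => hrep _ _ hτ ?_) (fun τ _ => ?_)
  · simpa [mul_assoc] using hinv _ _ (hr (s * τ)).2
  · simpa [mul_assoc] using hinv _ _ (hr (s⁻¹ * τ)).2
  · simpa using hf (r (s * τ)) _ (hr (s * τ)).2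

theorem MvPolynomial.rename_prod_eq_or_eq_neg {ι R : Type*} [CommRing R] [NoZeroDivisors R]
    {H : Subgroup (Perm ι)} {E : Finset (Perm ι)} (hE : ∀ σ, ∃! τ, τ ∈ E ∧ τ⁻¹ * σ ∈ H)
    {F : MvPolynomial ι R} (hF : ∀ w ∈ H, rename w F = F ∨ rename w F = -F) (s : Perm ι) :
    rename s (∏ τ ∈ E, rename τ F) = ∏ τ ∈ E, rename τ F ∨
      rename s (∏ τ ∈ E, rename τ F) = -∏ τ ∈ E, rename τ F := by
  rw [← sq_eq_sq_iff_eq_or_eq_neg, map_prod, ← Finset.prod_pow, ← Finset.prod_pow]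
  simp only [rename_rename]
  refine Finset.prod_mul_left_of_existsUnique_inv_mul_mem hE (f := fun τ => rename τ F ^ 2)
    (fun g h hh => ?_) s
  rcases hF h hh with hw | hw <;> simp [Perm.coe_mul, ← rename_rename, hw]

section WreathProduct

variable {n m : ℕ}

theorem blockEmb_val_mod (hm : m ∣ n) (i : Fin m) (j : Fin (n / m)) :
    (blockEmb n m hm i j : ℕ) % m = i := by
  simp [blockEmb, Nat.mod_eq_of_lt i.isLt]

theorem blockEmb_val_div (hm : m ∣ n) (i : Fin m) (j : Fin (n / m)) :
    (blockEmb n m hm i j : ℕ) / m = j := by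
  simp [blockEmb, Nat.add_mul_div_left _ _ i.pos, Nat.div_eq_of_lt i.isLt]

theorem blockEmb_injective (hm : m ∣ n) (i : Fin m) : Function.Injective (blockEmb n m hm i) :=
  fun j j' h => Fin.ext <| by
    rw [← blockEmb_val_div hm i j, ← blockEmb_val_div hm i j', h]

theorem exists_blockEmb_comp_of_memWreath (hm : m ∣ n) {w : Perm (Fin n)}
    (hw : memWreath m n w) :
    ∃ (σ : Perm (Fin m)) (p : Fin m → Perm (Fin (n / m))),
      ∀ i, w ∘ blockEmb n m hm i = blockEmb n m hm (σ i) ∘ p i := by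
  rcases isEmpty_or_nonempty (Fin (n / m)) with _ | ⟨⟨j₀⟩⟩
  · exact ⟨1, 1, fun i => funext fun j => isEmptyElim j⟩
  have hblock : ∀ i j, (w (blockEmb n m hm i j) : ℕ) % m = (w (blockEmb n m hm i j₀) : ℕ) % m :=
    fun i j => (hw _ _).1 (by rw [blockEmb_val_mod, blockEmb_val_mod])
  let f (i : Fin m) : Fin m := ⟨(w (blockEmb n m hm i j₀) : ℕ) % m, Nat.mod_lt _ i.pos⟩
  let p (i : Fin m) (j : Fin (n / m)) : Fin (n / m) :=
    ⟨(w (blockEmb n m hm i j) : ℕ) / m, Nat.div_lt_div_of_lt_of_dvd hm (w _).isLt⟩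
  have hfp : ∀ i j, blockEmb n m hm (f i) (p i j) = w (blockEmb n m hm i j) := fun i j =>
    Fin.ext <| by
      change (w (blockEmb n m hm i j₀) : ℕ) % m + m * ((w (blockEmb n m hm i j) : ℕ) / m) = _
      rw [← hblock i j, Nat.mod_add_div]
  have hf : Function.Injective f := fun i i' h => Fin.ext <| by
    simpa only [blockEmb_val_mod] using (hw _ _).2 (congrArg Fin.val h)
  have hp : ∀ i, Function.Injective (p i) := fun i j j' h =>
    blockEmb_injective hm i (w.injective (by rw [← hfp, ← hfp, h]))
  exact ⟨ofBijective f (Finite.injective_iff_bijective.1 hf),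
    fun i => ofBijective (p i) (Finite.injective_iff_bijective.1 (hp i)),
    fun i => funext fun j => (hfp i j).symm⟩

theorem rename_aeval_blockEmb_of_memWreath (hm : m ∣ n) {A : MvPolynomial (Fin m) ℂ}
    (hA : ∀ σ : Perm (Fin m), rename σ A = A ∨ rename σ A = -A)
    {B : MvPolynomial (Fin (n / m)) ℂ} (hB : B.IsSymmetric) {w : Perm (Fin n)}
    (hw : memWreath m n w) :
    rename w (aeval (fun i => rename (blockEmb n m hm i) B) A) =
        aeval (fun i => rename (blockEmb n m hm i) B) A ∨
      rename w (aeval (fun i => rename (blockEmb n m hm i) B) A) =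
        -aeval (fun i => rename (blockEmb n m hm i) B) A := by
  obtain ⟨σ, p, hσp⟩ := exists_blockEmb_comp_of_memWreath hm hw
  have hblock : ∀ i, rename w (rename (blockEmb n m hm i) B) = rename (blockEmb n m hm (σ i)) B :=
    fun i => by rw [rename_rename, hσp, ← rename_rename, hB (p i)]
  have hrename : rename w (aeval (fun i => rename (blockEmb n m hm i) B) A) =
      aeval (fun i => rename (blockEmb n m hm i) B) (rename σ A) := by
    rw [← AlgHom.comp_apply, comp_aeval, aeval_rename]
    simp only [hblock]
    rfl
  rcases hA σ with h | h
  · exact Or.inl (by rw [hrename, h])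
  · exact Or.inr (by rw [hrename, h, map_neg])

def wreathSubgroup (m n : ℕ) : Subgroup (Perm (Fin n)) where
  carrier := {w | memWreath m n w}
  mul_mem' ha hb x y := (hb x y).trans (ha _ _)
  one_mem' _ _ := Iff.rfl
  inv_mem' {w} hw x y := by simpa using (hw (w⁻¹ x) (w⁻¹ y)).symm

theorem addRight_mem_wreathSubgroup (hm : m ∣ n) [NeZero n] (k : Fin n) :
    Equiv.addRight k ∈ wreathSubgroup m n := fun x y => by
  simp only [coe_addRight, Fin.val_add, Nat.mod_mod_of_dvd _ hm]
  exact ⟨fun h => Nat.ModEq.add_right _ h, Nat.ModEq.add_right_cancel' _⟩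

end WreathProduct

/-- let `m ∣ n`, `n ≥ 3`.  Suppose `A ∈ ℂ[Y₀,…,Y_{m-1}]` satisfies
`A(Y_{σ(0)},…,Y_{σ(m-1)}) = ±A` for every `σ ∈ S_m`, and `B ∈ ℂ[Z₀,…,Z_{n/m-1}]` is
symmetric.  Set `B_i = B(X_i, X_{i+m}, …, X_{i+(n/m-1)m})` and `F = A(B₀,…,B_{m-1})`.
If `deg_{X₀} F(X₀,0,…,0) > 0`, then for any left transversal `ℰ` of `S_m ≀ S_{n/m}` in `S_n`
(one representative per left coset, i.e. per unordered partition into `m` blocks of size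
`n/m`), the product `Π_{φ ∈ ℰ} φ(F)` is symmetric in `X₀,…,X_{n-1}`. -/
theorem stmt_12 (n m : ℕ) (hm : m ∣ n) (hn : 3 ≤ n)
    (A : MvPolynomial (Fin m) ℂ)
    (hA : ∀ σ : Equiv.Perm (Fin m), rename (⇑σ) A = A ∨ rename (⇑σ) A = -A)
    (B : MvPolynomial (Fin (n / m)) ℂ) (hB : B.IsSymmetric)
    (F : MvPolynomial (Fin n) ℂ)
    (hF : F = MvPolynomial.aeval
      (fun i : Fin m => MvPolynomial.rename (fun j : Fin (n / m) => blockEmb n m hm i j) B) A)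
    (hdeg : 0 < (MvPolynomial.aeval
        (fun x : Fin n => if (x : ℕ) = 0 then (Polynomial.X : Polynomial ℂ) else 0) F).natDegree)
    (E : Finset (Equiv.Perm (Fin n)))
    (hE : ∀ σ : Equiv.Perm (Fin n), ∃! τ, τ ∈ E ∧ memWreath m n (τ⁻¹ * σ)) :
    (∏ τ ∈ E, rename (⇑τ) F).IsSymmetric := by
  have : NeZero n := ⟨by omega⟩
  have hwreath : ∀ w ∈ wreathSubgroup m n, rename w F = F ∨ rename w F = -F := fun w hw =>
    hF ▸ rename_aeval_blockEmb_of_memWreath hm hA hB hw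
  have hF₀ : aeval (Pi.single 0 (Polynomial.X : Polynomial ℂ)) F ≠ 0 := by
    have hsingle : (fun x : Fin n => if (x : ℕ) = 0 then (Polynomial.X : Polynomial ℂ) else 0) =
        Pi.single 0 (Polynomial.X : Polynomial ℂ) := by
      ext1 x
      simp only [Fin.val_eq_zero_iff, Pi.single_apply]
    exact Polynomial.ne_zero_of_natDegree_gt (hsingle ▸ hdeg)
  have hspec : ∀ k, aeval (Pi.single k (Polynomial.X : Polynomial ℂ)) F ≠ 0 := fun k => by
    simpa using aeval_single_ne_zero_of_rename_eq_or_eq_neg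
      (hwreath _ (addRight_mem_wreathSubgroup hm k)) hF₀
  refine isSymmetric_of_rename_swap_eq_or_eq_neg (by rw [Fintype.card_fin]; omega)
    (Polynomial.X : Polynomial ℂ) (fun a b => rename_prod_eq_or_eq_neg hE hwreath _) fun k => ?_
  rw [map_prod, Finset.prod_ne_zero_iff]
  intro τ _
  rw [← τ.apply_symm_apply k, aeval_single_rename]
  exact hspec _
end

section
/- Let n be a positive integer. The circulant determinant factors as Δ_n(X_0,...,X_{n-1}) = ∏_{m | n} Ψ_m(Y_{n,0}, ..., Y_{n,m-1}), where Y_{n,i} = Σ_{j=0}^{n/m - 1} X_{i + mj} for 0 ≤ i ≤ m-1, and Ψ_m(Z_0,...,Z_{m-1}) = ∏_{i ∈ (ℤ/mℤ)^×} (Σ_{j ∈ ℤ/mℤ} ε_m^{ij} Z_j). -/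
open MvPolynomial Finset

/-!
Conjugating the circulant matrix by the Vandermonde matrix of a primitive `n`-th root of unity
`ζ` diagonalizes it, so `Δ_n = ∏_{k < n} Σ_j ζ^{kj} X_j`. Grouping the `k < n` by
`d = gcd(n, k)` writes them as `k = i d` with `i < m = n / d` coprime to `m`, and `ζ^d = ε_m`.
Since `ε_m^{ix}` only depends on `x mod m`, the factor for `k = i d` collapses to
`Σ_{j < m} ε_m^{ij} Y_{n,j}`.
-/

theorem pow_val_add_of_pow_eq_one {M : Type*} [Monoid M] {ζ : M} {n : ℕ} (hζ : ζ ^ n = 1)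
    (a b : Fin n) :
    ζ ^ ((a + b : Fin n) : ℕ) = ζ ^ (a : ℕ) * ζ ^ (b : ℕ) := by
  rw [Fin.val_add, ← pow_eq_pow_mod _ hζ, pow_add]

namespace Matrix

theorem transpose_circulant_mul_vandermonde {R : Type*} [CommRing R] {n : ℕ} [NeZero n]
    {ζ : R} (hζ : ζ ^ n = 1) (v : Fin n → R) :
    (circulant v)ᵀ * vandermonde (fun i => ζ ^ (i : ℕ)) =
      vandermonde (fun i => ζ ^ (i : ℕ)) *
        diagonal fun k : Fin n => ∑ j : Fin n, ζ ^ ((k : ℕ) * j) * v j := by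
  ext i k
  have hk : (ζ ^ (k : ℕ)) ^ n = 1 := by rw [← pow_mul, mul_comm, pow_mul, hζ, one_pow]
  rw [mul_diagonal, mul_apply, mul_sum]
  refine (Fintype.sum_equiv (Equiv.addLeft i) _ _ fun l => ?_).symm
  simp only [Equiv.coe_addLeft, transpose_apply, circulant_apply, add_sub_cancel_left,
    vandermonde_apply, ← pow_mul, mul_comm _ (k : ℕ)]
  rw [pow_mul ζ k, pow_mul ζ k, pow_mul ζ k, pow_val_add_of_pow_eq_one hk]
  ring

theorem det_circulant {R : Type*} [CommRing R] [IsDomain R] {n : ℕ} [NeZero n]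
    {ζ : R} (hζ : IsPrimitiveRoot ζ n) (v : Fin n → R) :
    (circulant v).det = ∏ k : Fin n, ∑ j : Fin n, ζ ^ ((k : ℕ) * j) * v j := by
  have hF : (vandermonde fun i : Fin n => ζ ^ (i : ℕ)).det ≠ 0 :=
    det_vandermonde_ne_zero_iff.2 fun i j h => Fin.ext (hζ.pow_inj i.isLt j.isLt h)
  have := congrArg det (transpose_circulant_mul_vandermonde hζ.pow_eq_one v)
  rw [det_mul, det_mul, det_transpose, det_diagonal, mul_comm] at this
  exact mul_left_cancel₀ hF this

end Matrix

theorem Nat.prod_range_filter_gcd_eq {M : Type*} [CommMonoid M] (f : ℕ → M) {n d : ℕ}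
    (hd : d ∣ n) :
    ∏ k ∈ range n with n.gcd k = d, f k =
      ∏ i ∈ range (n / d) with i.Coprime (n / d), f (i * d) := by
  rcases d.eq_zero_or_pos with rfl | hd0
  · simp [Nat.eq_zero_of_zero_dvd hd]
  obtain ⟨e, rfl⟩ := hd
  rw [Nat.mul_div_cancel_left e hd0]
  symm
  refine prod_nbij (· * d) (fun i hi => ?_) (fun i _ j _ h => Nat.eq_of_mul_eq_mul_right hd0 h)
    (fun k hk => ?_) fun _ _ => rfl
  · simp only [mem_filter, mem_range] at hi ⊢
    refine ⟨by rw [mul_comm d]; gcongr; exact hi.1, ?_⟩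
    rw [mul_comm d, Nat.gcd_mul_right, Nat.coprime_comm.1 hi.2, one_mul]
  · simp only [coe_filter, mem_range, Set.mem_image, Set.mem_ofPred_eq] at hk ⊢
    obtain ⟨q, rfl⟩ : d ∣ k := hk.2 ▸ Nat.gcd_dvd_right _ _
    rw [Nat.gcd_mul_left, mul_eq_left₀ hd0.ne'] at hk
    exact ⟨q, ⟨(mul_lt_mul_iff_right₀ hd0).1 hk.1, Nat.coprime_comm.1 hk.2⟩, mul_comm q d⟩

theorem Nat.prod_range_eq_prod_divisors {M : Type*} [CommMonoid M] (f : ℕ → M) {n : ℕ}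
    (hn : n ≠ 0) :
    ∏ k ∈ range n, f k =
      ∏ m ∈ n.divisors, ∏ i ∈ range m with i.Coprime m, f (i * (n / m)) := by
  rw [← prod_fiberwise_of_maps_to (g := n.gcd) (t := n.divisors)
    fun k _ => Nat.mem_divisors.2 ⟨Nat.gcd_dvd_left n k, hn⟩, ← Nat.prod_div_divisors]
  refine prod_congr rfl fun d hd => ?_
  have hdn := Nat.dvd_of_mem_divisors hd
  rw [Nat.prod_range_filter_gcd_eq f (Nat.div_dvd_of_dvd hdn), Nat.div_div_self hdn hn]

theorem sum_range_pow_mul_sum_filter_mod {R : Type*} [CommSemiring R] {ε : R} {m n : ℕ}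
    (hm : 0 < m) (hε : ε ^ m = 1) (i : ℕ) (v : Fin n → R) :
    ∑ j ∈ range m,
        ε ^ (i * j % m) * ∑ x ∈ univ.filter (fun x : Fin n => (x : ℕ) % m = j), v x =
      ∑ x : Fin n, ε ^ (i * x) * v x := by
  simp_rw [mul_sum]
  rw [← sum_fiberwise_of_maps_to (g := fun x : Fin n => (x : ℕ) % m)
    fun x _ => mem_range.2 (Nat.mod_lt _ hm)]
  refine sum_congr rfl fun j _ => sum_congr rfl fun x hx => ?_
  rw [← (mem_filter.1 hx).2, Nat.mul_mod_mod, ← pow_eq_pow_mod _ hε]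

theorem Complex.exp_two_pi_I_div_eq_pow {m n : ℕ} (hmn : m ∣ n) (hn : n ≠ 0) :
    exp (2 * Real.pi * I / m) = exp (2 * Real.pi * I / n) ^ (n / m) := by
  have hm : (m : ℂ) ≠ 0 := Nat.cast_ne_zero.2 (ne_zero_of_dvd_ne_zero hn hmn)
  rw [← exp_nat_mul, Nat.cast_div hmn hm]
  field_simp

/-- factorization of the circulant determinant
`Δ_n = Π_{m ∣ n} Ψ_m(Y_{n,0}, …, Y_{n,m-1})`, where `Y_{n,i} = Σ_{j=0}^{n/m-1} X_{i+mj}`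
(the sum of the `X_x` over `x ≡ i (mod m)`),
`Ψ_m(Z₀,…,Z_{m-1}) = Π_{i ∈ (ℤ/mℤ)ˣ} Σ_{j ∈ ℤ/mℤ} ε_m^{ij} Z_j` and `ε_m = e^{2πi/m}`.
Here `Δ_n` is the determinant of the `n × n` circulant matrix whose `(i,j)` entry is
`X_{(j-i) mod n}`. -/
theorem stmt_17 (n : ℕ) (hn : 0 < n) :
    Matrix.det (Matrix.of fun i j : Fin n =>
        (X (⟨((j : ℕ) + n - (i : ℕ)) % n, Nat.mod_lt _ hn⟩ : Fin n) : MvPolynomial (Fin n) ℂ)) =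
      ∏ m ∈ n.divisors,
        ∏ i ∈ (Finset.range m).filter (fun i => Nat.Coprime i m),
          ∑ j ∈ Finset.range m,
            MvPolynomial.C (Complex.exp (2 * Real.pi * Complex.I / m) ^ (i * j % m)) *
              ∑ x ∈ Finset.univ.filter (fun x : Fin n => (x : ℕ) % m = j),
                (X x : MvPolynomial (Fin n) ℂ) := by
  have : NeZero n := ⟨hn.ne'⟩
  set ζ : MvPolynomial (Fin n) ℂ := C (Complex.exp (2 * Real.pi * Complex.I / n))
  have hζ : IsPrimitiveRoot ζ n :=
    (Complex.isPrimitiveRoot_exp n hn.ne').map_of_injective (C_injective _ _)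
  have hcirc : (Matrix.of fun i j : Fin n =>
      (X (⟨((j : ℕ) + n - (i : ℕ)) % n, Nat.mod_lt _ hn⟩ : Fin n) :
        MvPolynomial (Fin n) ℂ)) =
      (Matrix.circulant X).transpose := by
    ext i j : 1
    simp only [Matrix.of_apply, Matrix.transpose_apply, Matrix.circulant_apply, Fin.sub_def]
    have := i.isLt
    congr 3
    omega
  rw [hcirc, Matrix.det_transpose, Matrix.det_circulant hζ,
    Fin.prod_univ_eq_prod_range (fun k => ∑ j : Fin n, ζ ^ (k * j) * X j),
    Nat.prod_range_eq_prod_divisors _ hn.ne']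
  refine prod_congr rfl fun m hm => prod_congr rfl fun i _ => ?_
  have hmn := Nat.dvd_of_mem_divisors hm
  have hε := (Complex.isPrimitiveRoot_exp m (ne_zero_of_dvd_ne_zero hn.ne' hmn)).map_of_injective
    (C_injective (Fin n) ℂ)
  simp only [map_pow]
  rw [sum_range_pow_mul_sum_filter_mod (Nat.pos_of_dvd_of_pos hmn hn) hε.pow_eq_one,
    Complex.exp_two_pi_I_div_eq_pow hmn hn.ne']
  refine sum_congr rfl fun x _ => ?_
  rw [map_pow, ← pow_mul]
  congr 2
  ring
end
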